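/- Let k be a positive integer. For every ε > 0 there exists a constant C > 0 such that for all positive integers Q, N with Q^k ≤ N ≤ Q^{2k}, every integer M, and every sequence of complex numbers (z_n), one has ∑_{q=1}^{Q} ∑_{1 ≤ a ≤ q^k, gcd(a,q)=1} |∑_{n=M+1}^{M+N} z_n e(n a / q^k)|^2 ≤ C · Q^ε · N · S · ∑_{n=M+1}^{M+N} |z_n|^2, where, with δ = 1/(2N), S = sup over real x with 1 ≤ x ≤ Q and over α₀ ∈ 𝒜_k(x) of the cardinality |{α ∈ 𝒜_k(x) : ‖α − α₀‖ < δ}|, and 𝒜_k(x) = {a/q^k : q, a positive integers with x/2 < q ≤ x, a ≤ q^k, gcd(a,q) = 1}. -/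

import Mathlib

/-!
For a trigonometric polynomial `P` with frequencies `|n| ≤ N`, Gallagher's inequality bounds
`|P(α)|²` by the mean of `|P|²` over `(α, α + η]` plus the total variation of `|P|²` there. Take
`η = 1/(2N)`. If every `η`-window around a point of a finite set `T ⊆ [0, 1]` contains at most `S`
points of `T`, the windows `(α, α + η]`, `α ∈ T`, cover each point of `(0, 2]` at most `S` times.
Summing over `T` and using periodicity gives two integrals over one period. Parseval evaluates the
first as `∑ |z_n|²`; for the second, AM-GM gives `|(|P|²)'| ≤ 2πN |P|² + |P'|² / (2πN)`, and
Parseval with `|n| ≤ N` bounds it by `4πN ∑ |z_n|²`. This gives a large sieve with constant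
`(4 + 8π) N S`.

It applies to each dyadic range `x/2 < q ≤ x`, `x = Q/2^j`, because the fractions `a/q^k` with
`gcd(a, q) = 1` are pairwise distinct. There are `log₂ Q + 1 ≪_ε Q^ε` such ranges.
-/

open Finset

/-- `e(α) = exp(2πiα)`. -/
noncomputable def eC (α : ℝ) : ℂ := Complex.exp (2 * Real.pi * Complex.I * α)

/-- The large sieve sum with k-th power moduli:
`∑_{q=1}^{Q} ∑_{1 ≤ a ≤ q^k, gcd(a,q)=1} |∑_{n=M+1}^{M+N} z_n e(n a / q^k)|²`. -/
noncomputable def lsSum (k Q N : ℕ) (M : ℤ) (z : ℤ → ℂ) : ℝ :=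
  ∑ q ∈ Finset.Icc 1 Q,
    ∑ a ∈ (Finset.Icc 1 (q ^ k)).filter (fun a => Nat.gcd a q = 1),
      ‖∑ n ∈ Finset.Icc (M + 1) (M + (N : ℤ)),
        z n * eC ((n : ℝ) * (a : ℝ) / (q : ℝ) ^ k)‖ ^ 2

/-- `∑_{n=M+1}^{M+N} |z_n|²`. -/
noncomputable def zSum (N : ℕ) (M : ℤ) (z : ℤ → ℂ) : ℝ :=
  ∑ n ∈ Finset.Icc (M + 1) (M + (N : ℤ)), ‖z n‖ ^ 2

/-- `𝒜_k(x) = {a/q^k : x/2 < q ≤ x, 1 ≤ a ≤ q^k, gcd(a,q)=1}` as a set of reals. -/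
def Aset (k : ℕ) (x : ℝ) : Set ℝ :=
  {α | ∃ q a : ℕ, 0 < q ∧ x / 2 < (q : ℝ) ∧ (q : ℝ) ≤ x ∧ 0 < a ∧ a ≤ q ^ k ∧
    Nat.Coprime a q ∧ α = (a : ℝ) / (q : ℝ) ^ k}

/-- `‖α‖`: the distance from `α` to the nearest integer. -/
noncomputable def ndist (α : ℝ) : ℝ := |α - round α|

open MeasureTheory Complex

lemma eC_add (x y : ℝ) : eC (x + y) = eC x * eC y := by
  simp only [eC, ofReal_add, mul_add, Complex.exp_add]

lemma norm_eC (x : ℝ) : ‖eC x‖ = 1 := by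
  simpa [eC, mul_comm _ I, mul_assoc] using Complex.norm_exp_ofReal_mul_I (2 * Real.pi * x)

lemma eC_intCast (n : ℤ) : eC n = 1 := by
  simpa [eC, mul_comm, mul_assoc, mul_left_comm] using Complex.exp_int_mul_two_pi_mul_I n

lemma conj_eC (x : ℝ) : starRingEnd ℂ (eC x) = eC (-x) := by
  rw [eC, eC, ← Complex.exp_conj]
  simp [map_ofNat]

@[fun_prop]
lemma continuous_eC : Continuous eC := by
  unfold eC; fun_prop

lemma hasDerivAt_eC_mul (a t : ℝ) :
    HasDerivAt (fun t => eC (a * t)) (2 * Real.pi * I * a * eC (a * t)) t := by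
  simpa [eC, mul_assoc, mul_comm, mul_left_comm] using
    ((hasDerivAt_id (t : ℂ)).const_mul (2 * Real.pi * I * a)).cexp.comp_ofReal

lemma integral_eC_intCast_mul (j : ℤ) :
    ∫ t in (0 : ℝ)..1, eC (j * t) = if j = 0 then 1 else 0 := by
  split_ifs with hj
  · simp [hj, eC]
  have hc : (2 * Real.pi * I * j : ℂ) ≠ 0 := by simp [Real.pi_ne_zero, I_ne_zero, hj]
  simp only [eC, ofReal_mul, ofReal_intCast, ← mul_assoc]
  rw [integral_exp_mul_complex hc]
  have hj1 := eC_intCast j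
  simp only [eC, ofReal_intCast] at hj1
  simp [hj1]

noncomputable def trigPoly (c : ℤ → ℂ) (s : Finset ℤ) (t : ℝ) : ℂ :=
  ∑ n ∈ s, c n * eC (n * t)

section TrigPoly

variable (c : ℤ → ℂ) (s : Finset ℤ)

lemma continuous_trigPoly : Continuous (trigPoly c s) :=
  continuous_finsetSum _ fun _ _ => by fun_prop

lemma hasDerivAt_trigPoly (t : ℝ) :
    HasDerivAt (trigPoly c s) (trigPoly (fun n => 2 * Real.pi * I * n * c n) s t) t := by
  unfold trigPoly
  refine (HasDerivAt.fun_sum fun (n : ℤ) _ => (hasDerivAt_eC_mul n t).const_mul (c n)).congr_deriv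
    (sum_congr rfl fun n _ => by push_cast; ring)

lemma trigPoly_periodic : Function.Periodic (trigPoly c s) 1 := fun t => by
  refine sum_congr rfl fun n _ => ?_
  rw [mul_add, mul_one, eC_add, eC_intCast, mul_one]

lemma integral_norm_sq_trigPoly :
    ∫ t in (0 : ℝ)..1, ‖trigPoly c s t‖ ^ 2 = ∑ n ∈ s, ‖c n‖ ^ 2 := by
  have hexpand : ∀ t : ℝ, ((‖trigPoly c s t‖ ^ 2 : ℝ) : ℂ) =
      ∑ m ∈ s, ∑ n ∈ s, starRingEnd ℂ (c m) * c n * eC ((n - m : ℤ) * t) := fun t => by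
    rw [ofReal_pow, ← conj_mul', trigPoly, map_sum, sum_mul_sum]
    refine sum_congr rfl fun m _ => sum_congr rfl fun n _ => ?_
    rw [map_mul, conj_eC, Int.cast_sub, sub_mul, sub_eq_neg_add, eC_add]
    ring
  apply ofReal_injective
  rw [← intervalIntegral.integral_ofReal, intervalIntegral.integral_congr fun t _ => hexpand t,
    intervalIntegral.integral_finsetSum fun m _ => Continuous.intervalIntegrable (by fun_prop) _ _,
    ofReal_sum]
  refine sum_congr rfl fun m hm => ?_
  rw [intervalIntegral.integral_finsetSum fun n _ =>
    Continuous.intervalIntegrable (by fun_prop) _ _]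
  simp only [intervalIntegral.integral_const_mul, integral_eC_intCast_mul, sub_eq_zero,
    mul_ite, mul_one, mul_zero]
  rw [sum_ite_eq' s m, if_pos hm, conj_mul', ofReal_pow]

lemma integral_norm_sq_trigPoly_deriv_le {R : ℝ} (hs : ∀ n ∈ s, |(n : ℝ)| ≤ R) :
    ∫ t in (0 : ℝ)..1, ‖trigPoly (fun n => 2 * Real.pi * I * n * c n) s t‖ ^ 2 ≤
      (2 * Real.pi * R) ^ 2 * ∑ n ∈ s, ‖c n‖ ^ 2 := by
  rw [integral_norm_sq_trigPoly, mul_sum]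
  refine sum_le_sum fun n hn => ?_
  have hnorm : ‖2 * Real.pi * I * n‖ = 2 * Real.pi * |(n : ℝ)| := by
    simp [Real.pi_pos.le]
  rw [norm_mul, mul_pow, hnorm]
  gcongr
  exact hs n hn

lemma integral_abs_deriv_norm_sq_trigPoly_le {R : ℝ} (hR : 0 < R) (hs : ∀ n ∈ s, |(n : ℝ)| ≤ R) :
    ∫ t in (0 : ℝ)..1,
        |2 * inner ℝ (trigPoly c s t) (trigPoly (fun n => 2 * Real.pi * I * n * c n) s t)| ≤
      4 * Real.pi * R * ∑ n ∈ s, ‖c n‖ ^ 2 := by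
  set P' := trigPoly (fun n => 2 * Real.pi * I * n * c n) s
  set L := 2 * Real.pi * R
  have hL : 0 < L := by positivity
  have hpt : ∀ t, |2 * inner ℝ (trigPoly c s t) (P' t)| ≤
      L * ‖trigPoly c s t‖ ^ 2 + L⁻¹ * ‖P' t‖ ^ 2 := fun t => by
    have hamgm : 0 ≤ L⁻¹ * (L * ‖trigPoly c s t‖ - ‖P' t‖) ^ 2 := by positivity
    rw [abs_mul, abs_two]
    have hCS := abs_real_inner_le_norm (trigPoly c s t) (P' t)
    have hLL : L * L⁻¹ = 1 := mul_inv_cancel₀ hL.ne'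
    nlinarith
  have hP := continuous_trigPoly c s
  have hP' := continuous_trigPoly (fun n => 2 * Real.pi * I * n * c n) s
  calc _ ≤ ∫ t in (0 : ℝ)..1, (L * ‖trigPoly c s t‖ ^ 2 + L⁻¹ * ‖P' t‖ ^ 2) :=
        intervalIntegral.integral_mono_on zero_le_one
          (Continuous.intervalIntegrable (by fun_prop) _ _)
          (Continuous.intervalIntegrable (by fun_prop) _ _) fun t _ => hpt t
    _ = L * ∑ n ∈ s, ‖c n‖ ^ 2 + L⁻¹ * ∫ t in (0 : ℝ)..1, ‖P' t‖ ^ 2 := by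
        rw [intervalIntegral.integral_add (Continuous.intervalIntegrable (by fun_prop) _ _)
          (Continuous.intervalIntegrable (by fun_prop) _ _), intervalIntegral.integral_const_mul,
          intervalIntegral.integral_const_mul, integral_norm_sq_trigPoly]
    _ ≤ L * ∑ n ∈ s, ‖c n‖ ^ 2 + L⁻¹ * (L ^ 2 * ∑ n ∈ s, ‖c n‖ ^ 2) := by
        gcongr
        exact integral_norm_sq_trigPoly_deriv_le c s hs
    _ = 4 * Real.pi * R * ∑ n ∈ s, ‖c n‖ ^ 2 := by
        field_simp
        ring

end TrigPoly

lemma le_inv_mul_integral_add_integral_abs_deriv {φ φ' : ℝ → ℝ}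
    (hφ : ∀ t, HasDerivAt φ (φ' t) t) (hφ' : Continuous φ') {η : ℝ} (hη : 0 < η) (α : ℝ) :
    φ α ≤ η⁻¹ * (∫ t in α..α + η, φ t) + ∫ t in α..α + η, |φ' t| := by
  have hφc : Continuous φ := continuous_iff_continuousAt.2 fun t => (hφ t).continuousAt
  set V := ∫ t in α..α + η, |φ' t|
  have hpt : ∀ t ∈ Set.Icc α (α + η), φ α ≤ φ t + V := by
    intro t ht
    have hftc : ∫ s in α..t, φ' s = φ t - φ α :=
      intervalIntegral.integral_eq_sub_of_hasDerivAt (fun s _ => hφ s) (hφ'.intervalIntegrable _ _)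
    have hV : |∫ s in α..t, φ' s| ≤ V :=
      (intervalIntegral.abs_integral_le_integral_abs ht.1).trans
        (intervalIntegral.integral_mono_interval le_rfl ht.1 ht.2
          (Filter.Eventually.of_forall fun s => abs_nonneg _)
          (hφ'.abs.intervalIntegrable (μ := volume) _ _))
    linarith [neg_abs_le (∫ s in α..t, φ' s)]
  have hmean : ∫ _ in α..α + η, φ α ≤ ∫ t in α..α + η, (φ t + V) :=
    intervalIntegral.integral_mono_on (by linarith) intervalIntegrable_const
      ((hφc.add continuous_const).intervalIntegrable _ _) hpt
  rw [intervalIntegral.integral_const, intervalIntegral.integral_add (hφc.intervalIntegrable _ _)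
    intervalIntegrable_const, intervalIntegral.integral_const, add_sub_cancel_left, smul_eq_mul,
    smul_eq_mul] at hmean
  calc φ α = η⁻¹ * (η * φ α) := by field_simp
    _ ≤ η⁻¹ * ((∫ t in α..α + η, φ t) + η * V) := by gcongr
    _ = _ := by field_simp

lemma card_filter_mem_Ioc_le {T : Finset ℝ} {η S : ℝ} (hS0 : 0 ≤ S)
    (hS : ∀ α₀ ∈ T, (#{α ∈ T | |α - α₀| < η} : ℝ) ≤ S) (t : ℝ) :
    (#{α ∈ T | t ∈ Set.Ioc α (α + η)} : ℝ) ≤ S := by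
  obtain h | ⟨α₀, hα₀⟩ := (T.filter fun α => t ∈ Set.Ioc α (α + η)).eq_empty_or_nonempty
  · rwa [h, card_empty, Nat.cast_zero]
  obtain ⟨hα₀T, hα₀t, htα₀⟩ := mem_filter.1 hα₀
  refine le_trans ?_ (hS α₀ hα₀T)
  refine Nat.cast_le.2 (card_le_card fun α hα => ?_)
  obtain ⟨hαT, hαt, htα⟩ := mem_filter.1 hα
  exact mem_filter.2 ⟨hαT, abs_lt.2 ⟨by linarith, by linarith⟩⟩

lemma sum_integral_le_of_card_filter_le {T : Finset ℝ} (hT : ∀ α ∈ T, α ∈ Set.Icc (0 : ℝ) 1)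
    {η S : ℝ} (hη : 0 < η) (hη1 : η ≤ 1) (hS0 : 0 ≤ S)
    (hS : ∀ α₀ ∈ T, (#{α ∈ T | |α - α₀| < η} : ℝ) ≤ S) {h : ℝ → ℝ} (hc : Continuous h)
    (h0 : 0 ≤ h) (hp : Function.Periodic h 1) :
    ∑ α ∈ T, ∫ t in α..α + η, h t ≤ 2 * S * ∫ t in (0 : ℝ)..1, h t := by
  have hind : ∀ α, ∫ t in α..α + η, h t = ∫ t, (Set.Ioc α (α + η)).indicator h t := fun α => by
    rw [intervalIntegral.integral_of_le (by linarith), integral_indicator measurableSet_Ioc]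
  have hint : ∀ a b : ℝ, Integrable ((Set.Ioc a b).indicator h) :=
    fun a b => hc.integrableOn_Ioc.integrable_indicator measurableSet_Ioc
  have hpt : ∀ t, ∑ α ∈ T, (Set.Ioc α (α + η)).indicator h t ≤
      S * (Set.Ioc (0 : ℝ) 2).indicator h t := by
    intro t
    simp only [Set.indicator_apply]
    rw [← sum_filter, sum_const, nsmul_eq_mul]
    split_ifs with ht
    · exact mul_le_mul_of_nonneg_right (card_filter_mem_Ioc_le hS0 hS t) (h0 t)
    · rw [filter_false_of_mem fun α hα htα => ht ?_, card_empty, Nat.cast_zero, zero_mul, mul_zero]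
      obtain ⟨hα0, hα1⟩ := hT α hα
      exact ⟨by linarith [htα.1], by linarith [htα.2]⟩
  have hperiod : ∫ t in (0 : ℝ)..2, h t = 2 * ∫ t in (0 : ℝ)..1, h t := by
    simpa using hp.intervalIntegral_add_zsmul_eq 2 0 fun _ _ => hc.intervalIntegrable _ _
  calc ∑ α ∈ T, ∫ t in α..α + η, h t = ∫ t, ∑ α ∈ T, (Set.Ioc α (α + η)).indicator h t := by
        rw [integral_finsetSum T fun α _ => hint _ _]
        exact sum_congr rfl fun α _ => hind α
    _ ≤ ∫ t, S * (Set.Ioc (0 : ℝ) 2).indicator h t :=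
        integral_mono (integrable_finsetSum T fun α _ => hint _ _) ((hint 0 2).const_mul S) hpt
    _ = 2 * S * ∫ t in (0 : ℝ)..1, h t := by
        rw [integral_const_mul, integral_indicator measurableSet_Ioc,
          ← intervalIntegral.integral_of_le zero_le_two, hperiod]
        ring

theorem sum_norm_sq_trigPoly_le {N : ℕ} (hN : 0 < N) (c : ℤ → ℂ) {s : Finset ℤ}
    (hs : ∀ n ∈ s, |(n : ℝ)| ≤ N) {T : Finset ℝ} (hT : ∀ α ∈ T, α ∈ Set.Icc (0 : ℝ) 1)
    {S : ℝ} (hS0 : 0 ≤ S) (hS : ∀ α₀ ∈ T, (#{α ∈ T | |α - α₀| < 1 / (2 * N)} : ℝ) ≤ S) :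
    ∑ α ∈ T, ‖trigPoly c s α‖ ^ 2 ≤ (4 + 8 * Real.pi) * N * S * ∑ n ∈ s, ‖c n‖ ^ 2 := by
  set P := trigPoly c s
  set P' := trigPoly (fun n => 2 * Real.pi * I * n * c n) s
  set φ' : ℝ → ℝ := fun t => 2 * inner ℝ (P t) (P' t)
  set η : ℝ := 1 / (2 * N)
  have hN1 : (1 : ℝ) ≤ N := by exact_mod_cast hN
  have hη : 0 < η := by positivity
  have hη1 : η ≤ 1 := by rw [div_le_one (by positivity)]; linarith
  have hφ : ∀ t, HasDerivAt (fun t => ‖P t‖ ^ 2) (φ' t) t :=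
    fun t => (hasDerivAt_trigPoly c s t).norm_sq
  have hP := continuous_trigPoly c s
  have hP' := continuous_trigPoly (fun n => 2 * Real.pi * I * n * c n) s
  have hφ'c : Continuous φ' := by fun_prop
  have hPp : Function.Periodic P 1 := trigPoly_periodic c s
  have hP'p : Function.Periodic P' 1 := trigPoly_periodic _ s
  calc ∑ α ∈ T, ‖P α‖ ^ 2
      ≤ ∑ α ∈ T, (η⁻¹ * (∫ t in α..α + η, ‖P t‖ ^ 2) + ∫ t in α..α + η, |φ' t|) :=
        sum_le_sum fun α _ => le_inv_mul_integral_add_integral_abs_deriv hφ hφ'c hη α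
    _ = η⁻¹ * ∑ α ∈ T, (∫ t in α..α + η, ‖P t‖ ^ 2) + ∑ α ∈ T, ∫ t in α..α + η, |φ' t| := by
        rw [sum_add_distrib, mul_sum]
    _ ≤ η⁻¹ * (2 * S * ∫ t in (0 : ℝ)..1, ‖P t‖ ^ 2) + 2 * S * ∫ t in (0 : ℝ)..1, |φ' t| := by
        gcongr
        · exact sum_integral_le_of_card_filter_le hT hη hη1 hS0 hS (by fun_prop)
            (fun t => by positivity) fun t => by simp only [hPp t]
        · exact sum_integral_le_of_card_filter_le hT hη hη1 hS0 hS (by fun_prop)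
            (fun t => abs_nonneg _) fun t => by simp only [φ', hPp t, hP'p t]
    _ ≤ η⁻¹ * (2 * S * ∑ n ∈ s, ‖c n‖ ^ 2) +
          2 * S * (4 * Real.pi * N * ∑ n ∈ s, ‖c n‖ ^ 2) := by
        rw [integral_norm_sq_trigPoly]
        gcongr
        exact integral_abs_deriv_norm_sq_trigPoly_le c s (by positivity) hs
    _ = (4 + 8 * Real.pi) * N * S * ∑ n ∈ s, ‖c n‖ ^ 2 := by
        simp only [η, one_div, inv_inv]
        ring

lemma ndist_le_abs (x : ℝ) : ndist x ≤ |x| := by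
  simpa [ndist] using round_le x 0

lemma sum_Icc_add_left {β : Type*} [AddCommMonoid β] (M : ℤ) (N : ℕ) (f : ℤ → β) :
    ∑ n ∈ Icc (M + 1) (M + N), f n = ∑ m ∈ Icc 1 (N : ℤ), f (M + m) := by
  rw [← map_add_left_Icc, sum_map]
  rfl

lemma norm_sum_Icc_eq_norm_trigPoly (M : ℤ) (N : ℕ) (z : ℤ → ℂ) (β : ℝ) :
    ‖∑ n ∈ Icc (M + 1) (M + N), z n * eC (n * β)‖ =
      ‖trigPoly (fun m => z (M + m)) (Icc 1 N) β‖ := by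
  have hshift : ∀ m : ℤ, z (M + m) * eC ((M + m : ℤ) * β) = eC (M * β) * (z (M + m) * eC (m * β)) :=
    fun m => by rw [Int.cast_add, add_mul, eC_add]; ring
  rw [sum_Icc_add_left, sum_congr rfl fun m _ => hshift m, ← mul_sum, norm_mul, norm_eC, one_mul]
  rfl

lemma natLog_div_eq_iff {Q q j : ℕ} (hq : 0 < q) (hqQ : q ≤ Q) :
    Nat.log 2 (Q / q) = j ↔ (Q / 2 ^ j : ℝ) / 2 < q ∧ (q : ℝ) ≤ Q / 2 ^ j := by
  rw [Nat.log_eq_iff (Or.inr ⟨one_lt_two, (Nat.div_pos hqQ hq).ne'⟩), Nat.le_div_iff_mul_le hq,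
    Nat.div_lt_iff_lt_mul hq, div_div, ← pow_succ, div_lt_iff₀' (by positivity),
    le_div_iff₀' (by positivity), and_comm]
  norm_cast

lemma sum_Icc_eq_sum_dyadic {β : Type*} [AddCommMonoid β] (Q : ℕ) (f : ℕ → β) :
    ∑ q ∈ Icc 1 Q, f q = ∑ j ∈ range (Nat.log 2 Q + 1),
      ∑ q ∈ Icc 1 Q with (Q / 2 ^ j : ℝ) / 2 < ((q : ℕ) : ℝ) ∧ (q : ℝ) ≤ Q / 2 ^ j, f q := by
  rw [← sum_fiberwise_of_maps_to (g := fun q => Nat.log 2 (Q / q)) fun q _ =>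
    mem_range.2 (Nat.lt_succ_of_le (Nat.log_mono_right (Nat.div_le_self Q q)))]
  refine sum_congr rfl fun j _ => sum_congr (filter_congr fun q hq => ?_) fun _ _ => rfl
  exact natLog_div_eq_iff (mem_Icc.1 hq).1 (mem_Icc.1 hq).2

lemma natLog_two_add_one_le {Q : ℕ} (hQ : 0 < Q) {ε : ℝ} (hε : 0 < ε) :
    (Nat.log 2 Q : ℝ) + 1 ≤ (1 / (ε * Real.log 2) + 1) * (Q : ℝ) ^ ε := by
  have hlog2 : 0 < Real.log 2 := Real.log_pos one_lt_two
  have hQε : 1 ≤ (Q : ℝ) ^ ε := Real.one_le_rpow (by exact_mod_cast hQ) hε.le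
  have hlog : (Nat.log 2 Q : ℝ) * Real.log 2 ≤ (Q : ℝ) ^ ε / ε := by
    rw [← Real.log_pow]
    exact (Real.log_le_log (by positivity) (by exact_mod_cast Nat.pow_log_le_self 2 hQ.ne')).trans
      (Real.log_le_rpow_div (by positivity) hε)
  have hJ : (Nat.log 2 Q : ℝ) ≤ (Q : ℝ) ^ ε / (ε * Real.log 2) := by
    rw [le_div_iff₀ (by positivity)]
    rw [le_div_iff₀ hε] at hlog
    linarith
  calc (Nat.log 2 Q : ℝ) + 1 ≤ (Q : ℝ) ^ ε / (ε * Real.log 2) + (Q : ℝ) ^ ε := by linarith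
    _ = _ := by ring

lemma div_two_pow_mem_Icc {Q j : ℕ} (hQ : 0 < Q) (hj : j ≤ Nat.log 2 Q) :
    (Q : ℝ) / 2 ^ j ∈ Set.Icc 1 (Q : ℝ) := by
  have h2j : 2 ^ j ≤ Q := (Nat.pow_le_pow_right two_pos hj).trans (Nat.pow_log_le_self 2 hQ.ne')
  exact ⟨(one_le_div (by positivity)).2 (by exact_mod_cast h2j),
    div_le_self (by positivity) (one_le_pow₀ one_le_two)⟩

section PowerFractions

variable (k : ℕ)

noncomputable def powFrac (p : Σ _ : ℕ, ℕ) : ℝ := p.2 / (p.1 : ℝ) ^ k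

noncomputable def fareyPairs (Q : ℕ) (x : ℝ) : Finset (Σ _ : ℕ, ℕ) :=
  {q ∈ Icc 1 Q | x / 2 < ((q : ℕ) : ℝ) ∧ (q : ℝ) ≤ x}.sigma
    fun q => {a ∈ Icc 1 (q ^ k) | Nat.gcd a q = 1}

variable {k}

lemma powFrac_injOn (hk : k ≠ 0) :
    Set.InjOn (powFrac k) {p | 0 < p.1 ∧ Nat.Coprime p.2 p.1} := by
  rintro ⟨q, a⟩ ⟨hq, hqa⟩ ⟨q', a'⟩ ⟨hq', hqa'⟩ h
  have h' : ((a : ℤ) : ℚ) / ((q ^ k : ℕ) : ℤ) = ((a' : ℤ) : ℚ) / ((q' ^ k : ℕ) : ℤ) := by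
    have : ((a / q ^ k : ℚ) : ℝ) = ((a' / q' ^ k : ℚ) : ℝ) := by push_cast; exact h
    push_cast
    exact_mod_cast this
  obtain ⟨ha, hqk⟩ := Rat.div_int_inj (by positivity) (by positivity)
    (by simpa using hqa.pow_right k) (by simpa using hqa'.pow_right k) h'
  obtain rfl : q = q' := Nat.pow_left_injective hk (by exact_mod_cast hqk)
  obtain rfl : a = a' := by exact_mod_cast ha
  rfl

lemma mem_fareyPairs {Q : ℕ} {x : ℝ} {p : Σ _ : ℕ, ℕ} :
    p ∈ fareyPairs k Q x ↔ (0 < p.1 ∧ p.1 ≤ Q ∧ x / 2 < p.1 ∧ (p.1 : ℝ) ≤ x) ∧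
      (0 < p.2 ∧ p.2 ≤ p.1 ^ k ∧ Nat.Coprime p.2 p.1) := by
  simp only [fareyPairs, mem_sigma, mem_filter, mem_Icc, Nat.one_le_iff_ne_zero,
    Nat.pos_iff_ne_zero, Nat.Coprime, and_assoc]

lemma coe_image_fareyPairs {Q : ℕ} {x : ℝ} (hx : x ≤ Q) :
    ((fareyPairs k Q x).image (powFrac k) : Set ℝ) = Aset k x := by
  ext α
  simp only [coe_image, Set.mem_image, mem_coe, mem_fareyPairs, Aset, Set.mem_ofPred_eq]
  constructor
  · rintro ⟨⟨q, a⟩, ⟨⟨hq, -, hxq, hqx⟩, ha, haq, hcop⟩, rfl⟩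
    exact ⟨q, a, hq, hxq, hqx, ha, haq, hcop, rfl⟩
  · rintro ⟨q, a, hq, hxq, hqx, ha, haq, hcop, rfl⟩
    exact ⟨⟨q, a⟩, ⟨⟨hq, by exact_mod_cast hqx.trans hx, hxq, hqx⟩, ha, haq, hcop⟩, rfl⟩

lemma powFrac_mem_Icc {Q : ℕ} {x : ℝ} {p : Σ _ : ℕ, ℕ} (hp : p ∈ fareyPairs k Q x) :
    powFrac k p ∈ Set.Icc (0 : ℝ) 1 := by
  obtain ⟨⟨hq, -⟩, -, hak, -⟩ := mem_fareyPairs.1 hp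
  exact ⟨by unfold powFrac; positivity,
    div_le_one_of_le₀ (by exact_mod_cast hak) (by positivity)⟩

lemma one_mem_Aset : (1 : ℝ) ∈ Aset k 1 :=
  ⟨1, 1, one_pos, by norm_num, by norm_num, one_pos, by simp, Nat.coprime_one_left 1, by simp⟩

lemma bddAbove_ncard_Aset (Q : ℕ) (δ : ℝ) :
    BddAbove {r : ℝ | ∃ x : ℝ, 1 ≤ x ∧ x ≤ Q ∧ ∃ α₀ ∈ Aset k x,
      r = Set.ncard {α ∈ Aset k x | ndist (α - α₀) < δ}} := by
  refine ⟨#((Icc 1 Q).sigma fun q => Icc 1 (q ^ k)), ?_⟩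
  rintro r ⟨x, -, hxQ, α₀, -, rfl⟩
  rw [← coe_image_fareyPairs hxQ]
  refine Nat.cast_le.2 ((Set.ncard_le_ncard (Set.sep_subset _ _) (finite_toSet _)).trans ?_)
  rw [Set.ncard_coe_finset]
  exact card_image_le.trans
    (card_le_card (sigma_mono (filter_subset _ _) fun _ => filter_subset _ _))

lemma lsSum_eq_sum_fareyPairs (Q N : ℕ) (M : ℤ) (z : ℤ → ℂ) :
    lsSum k Q N M z = ∑ j ∈ range (Nat.log 2 Q + 1), ∑ p ∈ fareyPairs k Q (Q / 2 ^ j),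
      ‖∑ n ∈ Icc (M + 1) (M + N), z n * eC (n * p.2 / (p.1 : ℝ) ^ k)‖ ^ 2 := by
  rw [lsSum, sum_Icc_eq_sum_dyadic]
  simp only [fareyPairs, sum_sigma]

lemma sum_fareyPairs_le (hk : k ≠ 0) {Q N : ℕ} (hN : 0 < N) {x : ℝ} (hx : x ≤ Q) (M : ℤ)
    (z : ℤ → ℂ) {S : ℝ} (hS0 : 0 ≤ S)
    (hS : ∀ α₀ ∈ Aset k x, (Set.ncard {α ∈ Aset k x | ndist (α - α₀) < 1 / (2 * N)} : ℝ) ≤ S) :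
    ∑ p ∈ fareyPairs k Q x, ‖∑ n ∈ Icc (M + 1) (M + N), z n * eC (n * p.2 / (p.1 : ℝ) ^ k)‖ ^ 2 ≤
      (4 + 8 * Real.pi) * N * S * zSum N M z := by
  set T := (fareyPairs k Q x).image (powFrac k)
  have hT : (T : Set ℝ) = Aset k x := coe_image_fareyPairs hx
  have hfin : (Aset k x).Finite := hT ▸ T.finite_toSet
  have hinj : Set.InjOn (powFrac k) (fareyPairs k Q x) := (powFrac_injOn hk).mono fun p hp =>
    show 0 < p.1 ∧ _ from ⟨(mem_fareyPairs.1 hp).1.1, (mem_fareyPairs.1 hp).2.2.2⟩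
  calc _ = ∑ β ∈ T, ‖trigPoly (fun m => z (M + m)) (Icc 1 N) β‖ ^ 2 := by
        rw [sum_image hinj]
        refine sum_congr rfl fun p _ => ?_
        simp only [← norm_sum_Icc_eq_norm_trigPoly, powFrac, mul_div_assoc]
    _ ≤ (4 + 8 * Real.pi) * N * S * ∑ m ∈ Icc 1 (N : ℤ), ‖z (M + m)‖ ^ 2 := by
      refine sum_norm_sq_trigPoly_le hN _ (fun m hm => ?_) ?_ hS0 fun α₀ hα₀ => ?_
      · obtain ⟨h1, h2⟩ := mem_Icc.1 hm
        rw [abs_of_pos (by exact_mod_cast h1)]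
        exact_mod_cast h2
      · simp only [T, mem_image]
        rintro _ ⟨p, hp, rfl⟩
        exact powFrac_mem_Icc hp
      · have hα₀' : α₀ ∈ Aset k x := hT ▸ mem_coe.2 hα₀
        refine le_trans ?_ (hS α₀ hα₀')
        rw [← Set.ncard_coe_finset]
        refine Nat.cast_le.2
          (Set.ncard_le_ncard (fun α hα => ?_) (hfin.subset (Set.sep_subset _ _)))
        obtain ⟨hαT, hαα₀⟩ := mem_filter.1 hα
        exact ⟨hT ▸ mem_coe.2 hαT, (ndist_le_abs _).trans_lt hαα₀⟩
    _ = (4 + 8 * Real.pi) * N * S * zSum N M z := by rw [zSum, sum_Icc_add_left]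

end PowerFractions

/-- Reduction of the large sieve to counting Farey fractions in short intervals:
`Δ_k(Q,N) ≪ Q^ε N S`, where (with `δ = 1/(2N)`)
`S = sup_{1 ≤ x ≤ Q} sup_{α₀ ∈ 𝒜_k(x)} |{α ∈ 𝒜_k(x) : ‖α − α₀‖ < δ}|`. -/
theorem statement17 (k : ℕ) (hk : 0 < k) (ε : ℝ) (hε : 0 < ε) :
    ∃ C : ℝ, 0 < C ∧
      ∀ Q N : ℕ, 0 < Q → 0 < N → Q ^ k ≤ N → N ≤ Q ^ (2 * k) →
        ∀ (M : ℤ) (z : ℤ → ℂ),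
          lsSum k Q N M z ≤
            C * (Q : ℝ) ^ ε * (N : ℝ) *
              sSup {r : ℝ | ∃ x : ℝ, 1 ≤ x ∧ x ≤ (Q : ℝ) ∧ ∃ α₀ ∈ Aset k x,
                r = (Set.ncard {α ∈ Aset k x | ndist (α - α₀) < 1 / (2 * (N : ℝ))} : ℝ)} *
              zSum N M z := by
  refine ⟨(4 + 8 * Real.pi) * (1 / (ε * Real.log 2) + 1), by positivity, ?_⟩
  intro Q N hQ hN _ _ M z
  set S := sSup {r : ℝ | ∃ x : ℝ, 1 ≤ x ∧ x ≤ (Q : ℝ) ∧ ∃ α₀ ∈ Aset k x,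
    r = (Set.ncard {α ∈ Aset k x | ndist (α - α₀) < 1 / (2 * (N : ℝ))} : ℝ)}
  have hcount : ∀ x : ℝ, 1 ≤ x → x ≤ Q → ∀ α₀ ∈ Aset k x,
      (Set.ncard {α ∈ Aset k x | ndist (α - α₀) < 1 / (2 * (N : ℝ))} : ℝ) ≤ S :=
    fun x h1x hxQ α₀ hα₀ => le_csSup (bddAbove_ncard_Aset Q _) ⟨x, h1x, hxQ, α₀, hα₀, rfl⟩
  have hS0 : 0 ≤ S :=
    (Nat.cast_nonneg _).trans (hcount 1 le_rfl (by exact_mod_cast hQ) 1 one_mem_Aset)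
  have hZ0 : 0 ≤ zSum N M z := sum_nonneg fun _ _ => by positivity
  rw [lsSum_eq_sum_fareyPairs]
  calc _ ≤ ∑ j ∈ range (Nat.log 2 Q + 1), (4 + 8 * Real.pi) * N * S * zSum N M z :=
        sum_le_sum fun j hj =>
          have hx := div_two_pow_mem_Icc hQ (Nat.lt_succ_iff.1 (mem_range.1 hj))
          sum_fareyPairs_le hk.ne' hN hx.2 M z hS0 (hcount _ hx.1 hx.2)
    _ = ((Nat.log 2 Q : ℝ) + 1) * ((4 + 8 * Real.pi) * N * S * zSum N M z) := by
        rw [sum_const, card_range, nsmul_eq_mul]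
        push_cast
        ring
    _ ≤ (1 / (ε * Real.log 2) + 1) * (Q : ℝ) ^ ε * ((4 + 8 * Real.pi) * N * S * zSum N M z) := by
        gcongr
        exact natLog_two_add_one_le hQ hε
    _ = _ := by ring
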